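/- Let A be a derived (p,I)-complete δ-ring where I = (d) is generated by a distinguished element d. Then p, d is a regular sequence on A if and only if d, φ(d) is a regular sequence on A, where φ is the Frobenius lift of A. -/

import Mathlib

/-!
If `a, b` is regular on `M` and `M` is derived `a`-complete, then `b, a` is regular too: an
element killed by `b` is divisible by `a` with a quotient again killed by `b`, so it is
infinitely `a`-divisible, and derived completeness forces it to vanish. Modulo `d` the Frobenius
lift satisfies `φ(d) = d^p + p δ(d) ≡ δ(d) p` with `δ(d)` a unit, so `d, φ(d)` is regular iff
`d, p` is. Swapping with `p`-completeness in one direction and `d`-completeness in the other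
gives the theorem.
-/

open scoped BigOperators

/-- A δ-structure on a commutative `ℤ_(p)`-algebra `A`: a map `δ : A → A` with
`δ(0) = δ(1) = 0`, `δ(a+b) = δ a + δ b + (a^p + b^p - (a+b)^p)/p` (expressed via binomial
coefficients divided by the prime `p`), and
`δ(ab) = a^p δ b + b^p δ a + p δ a δ b`.  The field `isUnit_of_not_dvd` expresses that `A`
is a `ℤ_(p)`-algebra. -/
structure DeltaStructure (A : Type) [CommRing A] (p : ℕ) : Type where
  δ : A → A
  delta_zero : δ 0 = 0
  delta_one : δ 1 = 0
  delta_add : ∀ a b : A, δ (a + b) = δ a + δ b -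
      ∑ i ∈ Finset.Ioo 0 p, (((p.choose i) / p : ℕ) : A) * a ^ i * b ^ (p - i)
  delta_mul : ∀ a b : A, δ (a * b) =
      a ^ p * δ b + b ^ p * δ a + (p : A) * δ a * δ b
  isUnit_of_not_dvd : ∀ n : ℤ, ¬ ((p : ℤ) ∣ n) → IsUnit ((n : A))

/-- The Frobenius lift `φ(a) = a^p + p·δ(a)` associated to a δ-structure. -/
def DeltaStructure.phi {A : Type} [CommRing A] {p : ℕ} (D : DeltaStructure A p) (a : A) : A :=
  a ^ p + (p : A) * D.δ a

/-- An `A`-module `M` is derived `f`-complete iff the map `(xₙ) ↦ (xₙ - f·xₙ₊₁)` on `M^ℕ`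
is bijective (equivalently, `Hom(A[1/f], M) = Ext¹(A[1/f], M) = 0`). -/
def DerivedFComplete {A : Type} [CommRing A] (f : A) (M : Type) [AddCommGroup M]
    [Module A M] : Prop :=
  Function.Bijective (fun x : ℕ → M => fun n => x n - f • x (n + 1))

open RingTheory.Sequence Pointwise

variable {R M : Type} [CommRing R] [AddCommGroup M] [Module R M]

lemma isWeaklyRegular_pair_iff (a b : R) :
    IsWeaklyRegular M [a, b] ↔ IsSMulRegular M a ∧ IsSMulRegular (QuotSMulTop a M) b := by
  rw [isWeaklyRegular_cons_iff, isWeaklyRegular_singleton_iff]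

lemma isSMulRegular_quotSMulTop_iff (a b : R) :
    IsSMulRegular (QuotSMulTop a M) b ↔ ∀ x y : M, b • x = a • y → ∃ z, x = a • z := by
  simp only [isSMulRegular_quotient_iff_mem_of_smul_mem, Submodule.mem_smul_pointwise_iff_exists,
    Submodule.mem_top, true_and]
  exact ⟨fun h x y hxy => (h x ⟨y, hxy.symm⟩).imp fun _ => Eq.symm,
    fun h x ⟨y, hy⟩ => (h x y hy.symm).imp fun _ => Eq.symm⟩

lemma isSMulRegular_quotSMulTop_add_mul (a b c : R) :
    IsSMulRegular (QuotSMulTop a M) (b + a * c) ↔ IsSMulRegular (QuotSMulTop a M) b := by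
  have hsmul : (fun z : QuotSMulTop a M => (b + a * c) • z) = fun z => b • z := by
    funext z
    have hz : a • z = 0 := Module.mem_annihilator.mp (QuotSMulTop.mem_annihilator M a) z
    rw [add_smul, mul_comm, mul_smul, hz, smul_zero, add_zero]
  exact Iff.of_eq (congrArg Function.Injective hsmul)

lemma isWeaklyRegular_pair_unit_mul_add_mul {a b u : R} (hu : IsUnit u) (c : R) :
    IsWeaklyRegular M [a, u * b + a * c] ↔ IsWeaklyRegular M [a, b] := by
  rw [isWeaklyRegular_pair_iff, isWeaklyRegular_pair_iff, isSMulRegular_quotSMulTop_add_mul,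
    IsSMulRegular.mul_iff_right (hu.isSMulRegular _)]

lemma DerivedFComplete.eq_zero_of_forall_exists_smul {a : R} (hc : DerivedFComplete a M)
    {P : M → Prop} (hP : ∀ x, P x → ∃ y, P y ∧ x = a • y) {x : M} (hx : P x) : x = 0 := by
  choose f hfP hf using hP
  let s : ℕ → {y : M // P y} := fun n => Nat.rec ⟨x, hx⟩ (fun _ y => ⟨f y.1 y.2, hfP y.1 y.2⟩) n
  have hs : (fun n => (s n).1) = 0 := by
    apply hc.injective
    funext n
    simp only [Pi.zero_apply, smul_zero, sub_zero]
    exact sub_eq_zero.mpr (hf (s n).1 (s n).2)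
  exact congrFun hs 0

theorem IsWeaklyRegular.swap_of_derivedFComplete {a b : R} (hc : DerivedFComplete a M)
    (h : IsWeaklyRegular M [a, b]) : IsWeaklyRegular M [b, a] := by
  rw [isWeaklyRegular_pair_iff, isSMulRegular_quotSMulTop_iff] at h ⊢
  obtain ⟨ha, hb⟩ := h
  have hb_div : ∀ x : M, b • x = 0 → ∃ y, b • y = 0 ∧ x = a • y := by
    intro x hx
    obtain ⟨y, rfl⟩ := hb x 0 (by rw [hx, smul_zero])
    refine ⟨y, ha.right_eq_zero_of_smul ?_, rfl⟩
    rwa [smul_comm]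
  refine ⟨isSMulRegular_iff_right_eq_zero_of_smul.mpr
    fun x hx => hc.eq_zero_of_forall_exists_smul hb_div hx, fun x y hxy => ?_⟩
  obtain ⟨z, rfl⟩ := hb y x hxy.symm
  exact ⟨z, ha (show a • x = a • b • z by rw [hxy, smul_comm])⟩

theorem statement11 (p : ℕ) [Fact (Nat.Prime p)] {A : Type} [CommRing A]
    (D : DeltaStructure A p) (d : A) (hdist : IsUnit (D.δ d))
    (hc1 : DerivedFComplete (p : A) A) (hc2 : DerivedFComplete d A) :
    RingTheory.Sequence.IsWeaklyRegular A [(p : A), d] ↔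
      RingTheory.Sequence.IsWeaklyRegular A [d, D.phi d] := by
  have hphi : D.phi d = D.δ d * p + d * d ^ (p - 1) := by
    rw [DeltaStructure.phi, ← pow_succ', Nat.sub_add_cancel (Fact.out : p.Prime).one_le]
    ring
  rw [hphi, isWeaklyRegular_pair_unit_mul_add_mul hdist]
  exact ⟨IsWeaklyRegular.swap_of_derivedFComplete hc1,
    IsWeaklyRegular.swap_of_derivedFComplete hc2⟩
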